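/- Let G be a finite simple undirected graph with threshold function τ : V(G) → ℕ satisfying τ(v) ≥ 1 for every vertex v, let B ⊆ V(G) be an independent set of G, and let S ⊆ V(G) be a seed set. For i ≥ 0, if the set of vertices newly activated in round i+1, namely A[S,i+1] \ A[S,i], is contained in B, then the set of vertices newly activated in round i+2, namely A[S,i+2] \ A[S,i+1], is disjoint from B; in particular, A[S,i+2] \ A[S,i+1] ⊆ V(G) \ B. -/

import Mathlib

open scoped Classical

/-- The neighborhood of `u` in `G`, as a finset. -/
noncomputable def nbrs {V : Type*} [Fintype V] (G : SimpleGraph V) (u : V) : Finset V :=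
  Finset.univ.filter (fun w => G.Adj u w)

/-- The diffusion process: `diffusion G τ S i` is the set `A[S,i]` of vertices
active after `i` rounds starting from seed set `S`. -/
noncomputable def diffusion {V : Type*} [Fintype V] (G : SimpleGraph V) (τ : V → ℕ)
    (S : Finset V) : ℕ → Finset V
  | 0 => S
  | (i + 1) => diffusion G τ S i ∪
      Finset.univ.filter (fun u => τ u ≤ (nbrs G u ∩ diffusion G τ S i).card)

/-- The influence of a seed set `S`: all vertices eventually activated. -/
def influence {V : Type*} [Fintype V] (G : SimpleGraph V) (τ : V → ℕ) (S : Finset V) : Set V :=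
  {v | ∃ i, v ∈ diffusion G τ S i}

/-- `S` is a target set if its influence is the whole vertex set. -/
def isTargetSet {V : Type*} [Fintype V] (G : SimpleGraph V) (τ : V → ℕ) (S : Finset V) : Prop :=
  influence G τ S = Set.univ

/-- `C` is a vertex cover of `G`. -/
def isVertexCover {V : Type*} [Fintype V] (G : SimpleGraph V) (C : Finset V) : Prop :=
  ∀ u v, G.Adj u v → u ∈ C ∨ v ∈ C

section Diffusion

variable {V : Type*} [Fintype V] (G : SimpleGraph V) (τ : V → ℕ) (S : Finset V)

lemma mem_diffusion_succ (n : ℕ) (v : V) :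
    v ∈ diffusion G τ S (n + 1) ↔
      v ∈ diffusion G τ S n ∨ τ v ≤ (nbrs G v ∩ diffusion G τ S n).card := by
  simp [diffusion]

/-- Otherwise the active neighbourhood of `v` did not grow from round `n` to round `n + 1`,
so `v` would already have fired in round `n + 1`. -/
lemma exists_adj_newly_activated {n : ℕ} {v : V} (hv : v ∈ diffusion G τ S (n + 2))
    (hv' : v ∉ diffusion G τ S (n + 1)) :
    ∃ w, G.Adj v w ∧ w ∈ diffusion G τ S (n + 1) ∧ w ∉ diffusion G τ S n := by
  have fires : τ v ≤ (nbrs G v ∩ diffusion G τ S (n + 1)).card :=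
    ((mem_diffusion_succ G τ S (n + 1) v).mp hv).resolve_left hv'
  have not_fired : ¬ τ v ≤ (nbrs G v ∩ diffusion G τ S n).card :=
    fun hle => hv' ((mem_diffusion_succ G τ S n v).mpr (Or.inr hle))
  by_contra! hnone
  have hsub : nbrs G v ∩ diffusion G τ S (n + 1) ⊆ nbrs G v ∩ diffusion G τ S n := by
    intro w hw
    obtain ⟨hwv, hw⟩ := Finset.mem_inter.mp hw
    have hadj : G.Adj v w := by simpa [nbrs] using hwv
    exact Finset.mem_inter.mpr ⟨hwv, hnone w hadj hw⟩
  exact not_fired (fires.trans (Finset.card_le_card hsub))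

end Diffusion

theorem newly_activated_alternate_general {V : Type*} [Fintype V] (G : SimpleGraph V) (τ : V → ℕ)
    (B : Finset V) (hB : ∀ u ∈ B, ∀ v ∈ B, ¬ G.Adj u v)
    (S : Finset V) (i : ℕ)
    (h : ∀ v ∈ diffusion G τ S (i + 1), v ∉ diffusion G τ S i → v ∈ B) :
    ∀ v ∈ diffusion G τ S (i + 2), v ∉ diffusion G τ S (i + 1) → v ∉ B := by
  intro v hv2 hv1 hvB
  obtain ⟨w, hvw, hw1, hw0⟩ := exists_adj_newly_activated G τ S hv2 hv1
  exact hB v hvB w (h w hw1 hw0) hvw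

/-- If all vertices newly activated in round `i+1` lie in an independent set `B`,
then no vertex newly activated in round `i+2` lies in `B` (thresholds at least 1). -/
theorem newly_activated_alternate {V : Type*} [Fintype V] (G : SimpleGraph V) (τ : V → ℕ)
    (hτ : ∀ v, 1 ≤ τ v)
    (B : Finset V) (hB : ∀ u ∈ B, ∀ v ∈ B, ¬ G.Adj u v)
    (S : Finset V) (i : ℕ)
    (h : ∀ v ∈ diffusion G τ S (i + 1), v ∉ diffusion G τ S i → v ∈ B) :
    ∀ v ∈ diffusion G τ S (i + 2), v ∉ diffusion G τ S (i + 1) → v ∉ B :=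
  newly_activated_alternate_general G τ B hB S i h
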